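/- arXiv:2603.27373 — 8 statements merged into one kernel-verified Lean document; each statement's English description precedes it below -/
import Mathlib

section
/- If (α_n)_{n∈ℕ} is a sequence of isometries on a Hilbert space H satisfying α_j α_i = α_i α_{j-1} for all i < j, and x ∈ H is a fixed point of α_m (i.e., α_m x = x), then x is a fixed point of α_n for all n ≥ m. -/
open Function

theorem Function.IsFixedPt.of_partialShift_rel {X : Type*} (f : ℕ → X → X)
    (hf : ∀ i j : ℕ, i < j → ∀ x : X, f j (f i x) = f i (f (j - 1) x))
    {m : ℕ} {x : X} (hx : IsFixedPt (f m) x) {n : ℕ} (hn : m ≤ n) : IsFixedPt (f n) x := by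
  induction n, hn using Nat.le_induction with
  | base => exact hx
  | succ n hmn ih =>
    calc f (n + 1) x = f (n + 1) (f m x) := by rw [hx.eq]
      _ = f m (f n x) := hf m (n + 1) (Nat.lt_succ_of_le hmn) x
      _ = x := by rw [ih.eq, hx.eq]

theorem fixed_point_propagates_general
    {H : Type*} [NormedAddCommGroup H] [InnerProductSpace ℂ H]
    (α : ℕ → H →ₗᵢ[ℂ] H)
    (hps : ∀ i j : ℕ, i < j → ∀ x : H, α j (α i x) = α i (α (j - 1) x))
    (m : ℕ) (x : H) (hx : α m x = x) :
    ∀ n : ℕ, m ≤ n → α n x = x :=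
  fun _ hn => IsFixedPt.of_partialShift_rel (fun k => α k) hps hx hn

/-- If `(α n)` is a sequence of isometries on a Hilbert space `H` satisfying
`α j ∘ α i = α i ∘ α (j-1)` for all `i < j`, and `x` is a fixed point of `α m`,
then `x` is a fixed point of `α n` for all `n ≥ m`. -/
theorem fixed_point_propagates
    {H : Type*} [NormedAddCommGroup H] [InnerProductSpace ℂ H] [CompleteSpace H]
    (α : ℕ → H →ₗᵢ[ℂ] H)
    (hps : ∀ i j : ℕ, i < j → ∀ x : H, α j (α i x) = α i (α (j - 1) x))
    (m : ℕ) (x : H) (hx : α m x = x) :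
    ∀ n : ℕ, m ≤ n → α n x = x :=
  fixed_point_propagates_general α hps m x hx
end

section
/- Let (α_n)_{n∈ℕ} be a sequence of partial shifts on a Hilbert space H and for each n let P̂_{n-1} denote the orthogonal projection onto the fixed point space of α_n. Then for all 0 ≤ i ≤ n, P̂_n α_i = α_i P̂_{n-1}. -/
open Filter Topology

/-- Key lemma: if `w` is orthogonal to every fixed point of `α n`, `y` is a fixed point of
`α (n+1)`, and `i ≤ n`, then `α i w ⊥ y`. -/
theorem key_orth
    {H : Type*} [NormedAddCommGroup H] [InnerProductSpace ℂ H] [CompleteSpace H]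
    (α : ℕ → H →ₗᵢ[ℂ] H)
    (hps : ∀ i j : ℕ, i < j → ∀ x : H, α j (α i x) = α i (α (j - 1) x))
    (i n : ℕ) (hin : i ≤ n) (w y : H)
    (hw : ∀ z : H, α n z = z → (inner ℂ w z : ℂ) = 0)
    (hy : α (n + 1) y = y) :
    (inner ℂ (α i w) y : ℂ) = 0 := by
  set f : H →L[ℂ] H := (α n).toContinuousLinearMap with hf
  have hfc : ⇑f = ⇑(α n) := rfl
  -- the Birkhoff averages of `w` converge to the orthogonal projection, which is `0`
  have hproj : (Submodule.orthogonalProjectionOnto (f.eqLocus (1 : H →L[ℂ] H)) w : H) = 0 := by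
    have : Submodule.orthogonalProjectionOnto (f.eqLocus (1 : H →L[ℂ] H)) w = 0 := by
      rw [Submodule.orthogonalProjectionOnto_eq_zero_iff]
      intro u hu
      have hu' : α n u = u := by
        have := hu
        simp only [LinearMap.mem_eqLocus] at this
        simpa [hfc] using congrArg (fun g => g) this
      rw [← inner_conj_symm, hw u hu', map_zero]
    rw [this, Submodule.coe_zero]
  have htend : Tendsto (fun N => birkhoffAverage ℂ f _root_.id N w) atTop (𝓝 0) := by
    have := f.tendsto_birkhoffAverage_orthogonalProjection ((α n).norm_toContinuousLinearMap_le) w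
    rwa [hproj] at this
  -- inner products with y are constant along the averages
  have hstep : ∀ v : H, (inner ℂ (α i (α n v)) y : ℂ) = inner ℂ (α i v) y := by
    intro v
    have h1 : α (n + 1) (α i v) = α i (α n v) := by
      have := hps i (n + 1) (Nat.lt_succ_of_le hin) v
      simpa using this
    calc (inner ℂ (α i (α n v)) y : ℂ) = inner ℂ (α (n+1) (α i v)) (α (n+1) y) := by
          rw [h1, hy]
      _ = inner ℂ (α i v) y := (α (n+1)).inner_map_map _ _
  have hiter : ∀ m : ℕ, (inner ℂ (α i (f^[m] w)) y : ℂ) = inner ℂ (α i w) y := by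
    intro m
    induction m with
    | zero => simp
    | succ m ih =>
      rw [Function.iterate_succ_apply']
      rw [show f (f^[m] w) = α n (f^[m] w) from rfl, hstep, ih]
  have havg : ∀ N : ℕ, 0 < N →
      (inner ℂ (α i (birkhoffAverage ℂ f _root_.id N w)) y : ℂ) = inner ℂ (α i w) y := by
    intro N hN
    unfold birkhoffAverage birkhoffSum
    simp only [map_smul, map_sum, inner_smul_left, sum_inner, id_eq]
    rw [Finset.sum_congr rfl (fun m _ => hiter m), Finset.sum_const, Finset.card_range]
    have hNC : (N : ℂ) ≠ 0 := Nat.cast_ne_zero.2 hN.ne'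
    field_simp
    rw [map_div₀, map_one, map_natCast, nsmul_eq_mul]
    field_simp
  -- take the limit
  have hlim : Tendsto (fun N => (inner ℂ (α i (birkhoffAverage ℂ f _root_.id N w)) y : ℂ))
      atTop (𝓝 0) := by
    have hc : Tendsto (fun N => α i (birkhoffAverage ℂ f _root_.id N w)) atTop (𝓝 (α i 0)) :=
      ((α i).continuous.tendsto _).comp htend
    rw [map_zero] at hc
    have := Filter.Tendsto.inner (𝕜 := ℂ) hc (tendsto_const_nhds (x := y))
    simpa using this
  have heventually : ∀ᶠ N in atTop,
      (inner ℂ (α i (birkhoffAverage ℂ f _root_.id N w)) y : ℂ) = inner ℂ (α i w) y :=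
    eventually_atTop.2 ⟨1, fun N hN => havg N hN⟩
  have := hlim.congr' (heventually.mono fun N h => h)
  exact (tendsto_nhds_unique this tendsto_const_nhds).symm

/-- Let `(α n)` be a sequence of partial shifts on a Hilbert space `H`, and for each `n`
let `Q n` be the orthogonal projection onto the fixed point space of `α n` (so `Q n`
plays the role of `P̂_{n-1}`), characterized by: `Q n x` is a fixed point of `α n`, and
`x - Q n x` is orthogonal to every fixed point of `α n`.  Then for all `0 ≤ i ≤ n`,
`P̂_n ∘ α i = α i ∘ P̂_{n-1}`, i.e. `Q (n+1) (α i x) = α i (Q n x)`. -/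
theorem projection_intertwines_partial_shifts
    {H : Type*} [NormedAddCommGroup H] [InnerProductSpace ℂ H] [CompleteSpace H]
    (α : ℕ → H →ₗᵢ[ℂ] H)
    (hps : ∀ i j : ℕ, i < j → ∀ x : H, α j (α i x) = α i (α (j - 1) x))
    (Q : ℕ → H → H)
    (hQfix : ∀ n x, α n (Q n x) = Q n x)
    (hQorth : ∀ n x, ∀ y : H, α n y = y → (inner ℂ (x - Q n x) y : ℂ) = 0)
    (i n : ℕ) (hin : i ≤ n) (x : H) :
    Q (n + 1) (α i x) = α i (Q n x) := by
  set d : H := Q (n + 1) (α i x) - α i (Q n x) with hd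
  have hfix_d : α (n + 1) d = d := by
    have h1 : α (n + 1) (Q (n + 1) (α i x)) = Q (n + 1) (α i x) := hQfix (n + 1) (α i x)
    have h2 : α (n + 1) (α i (Q n x)) = α i (Q n x) := by
      have := hps i (n + 1) (Nat.lt_succ_of_le hin) (Q n x)
      simp only [Nat.add_sub_cancel] at this
      rw [this, hQfix n x]
    rw [hd, map_sub, h1, h2]
  have h1 : (inner ℂ (α i x - Q (n + 1) (α i x)) d : ℂ) = 0 :=
    hQorth (n + 1) (α i x) d hfix_d
  have h2 : (inner ℂ (α i (x - Q n x)) d : ℂ) = 0 := by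
    refine key_orth α hps i n hin (x - Q n x) d (fun z hz => hQorth n x z hz) hfix_d
  have h3 : (inner ℂ d d : ℂ) = 0 := by
    have : (inner ℂ d d : ℂ) =
        inner ℂ (α i (x - Q n x)) d - inner ℂ (α i x - Q (n + 1) (α i x)) d := by
      rw [← inner_sub_left]
      congr 1
      rw [hd, map_sub]
      abel
    rw [this, h1, h2, sub_zero]
  have : d = 0 := by
    have := inner_self_eq_zero (𝕜 := ℂ).1 h3
    exact this
  have := sub_eq_zero.1 this
  exact this
end

section
/- For an SCH, an element x ∈ H^k lying in the subspace H^{k-1} is a k-cocycle if and only if it is a k-coboundary; i.e., H_c^k ∩ H^{k-1} = H_b^k ∩ H^{k-1}. -/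
/-!
If `x ∈ H^{k-1}`, the top face `α_{k+1}` fixes `x`, so `∂^k x = x - ∂^{k-1} x`: a cocycle
`x` is then the coboundary of itself. Conversely `∂^k ∘ ∂^{k-1} = 0`, because the
cosimplicial identities `α_j α_i = α_i α_{j-1}` (`i < j`) pair off the terms of the double
sum lying above the diagonal with those on or below it, with opposite signs.
-/

/-- The coboundary operator `∂^k = Σ_{i=0}^{k+1} (-1)^{k+1-i} α_i` (for `k ≥ -2`; by
convention `∂^k = 0` for `k ≤ -2`), as an operator on the ambient Hilbert space, built
from the partial shifts `α i`. -/
noncomputable def coboundaryZ {H : Type*} [NormedAddCommGroup H] [InnerProductSpace ℂ H]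
    (α : ℕ → H →ₗᵢ[ℂ] H) (k : ℤ) (x : H) : H :=
  ∑ i ∈ Finset.range (k + 2).toNat, ((-1 : ℂ) ^ (k + 1 - (i : ℤ))) • α i x

open Finset

section AlternatingFaceSum

variable {R M : Type*} [CommRing R] [AddCommGroup M] [Module R M]

/-- `alternatingFaceSum f (k + 2)` is `∂^k`; the natural exponent `n + 1 + i` has the parity
of the integer exponent `k + 1 - i`. -/
def alternatingFaceSum (f : ℕ → M →ₗ[R] M) (n : ℕ) (y : M) : M :=
  ∑ i ∈ range n, (-1 : R) ^ (n + 1 + i) • f i y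

theorem alternatingFaceSum_succ (f : ℕ → M →ₗ[R] M) (n : ℕ) (y : M) :
    alternatingFaceSum f (n + 1) y = f n y - alternatingFaceSum f n y := by
  have top_sign : (-1 : R) ^ (n + 1 + 1 + n) = 1 := Even.neg_one_pow ⟨n + 1, by ring⟩
  have flip_sign (i : ℕ) : (-1 : R) ^ (n + 1 + 1 + i) = -(-1 : R) ^ (n + 1 + i) := by
    rw [add_right_comm _ 1, pow_succ, mul_neg_one]
  rw [alternatingFaceSum, sum_range_succ, top_sign, one_smul]
  simp only [alternatingFaceSum, flip_sign, neg_smul, sum_neg_distrib]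
  abel

theorem alternatingFaceSum_succ_alternatingFaceSum (f : ℕ → M →ₗ[R] M)
    (hf : ∀ i j : ℕ, i < j → ∀ y : M, f j (f i y) = f i (f (j - 1) y)) (n : ℕ) (y : M) :
    alternatingFaceSum f (n + 1) (alternatingFaceSum f n y) = 0 := by
  have product_sign (i j : ℕ) :
      (-1 : R) ^ (n + 1 + 1 + j) * (-1 : R) ^ (n + 1 + i) = -(-1 : R) ^ (i + j) := by
    rw [← pow_add, show n + 1 + 1 + j + (n + 1 + i) = 2 * (n + 1) + (i + j) + 1 by ring,
      pow_succ, pow_add, pow_mul]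
    simp
  have expand : alternatingFaceSum f (n + 1) (alternatingFaceSum f n y) =
      -∑ i ∈ range n, ∑ j ∈ range (n + 1), (-1 : R) ^ (i + j) • f j (f i y) := by
    simp only [alternatingFaceSum, map_sum, map_smul, smul_sum, smul_smul, product_sign,
      neg_smul, sum_neg_distrib]
    rw [sum_comm]
  -- split each inner sum at `j = i`; above the diagonal the cosimplicial identity applies
  have split (i : ℕ) (hi : i < n) :
      ∑ j ∈ range (n + 1), (-1 : R) ^ (i + j) • f j (f i y) =
        ∑ j ∈ range (i + 1), (-1 : R) ^ (i + j) • f j (f i y) -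
          ∑ j ∈ Ico i n, (-1 : R) ^ (i + j) • f i (f j y) := by
    rw [← sum_range_add_sum_Ico _ (by omega : i + 1 ≤ n + 1), ← sum_Ico_add', sub_eq_add_neg,
      ← sum_neg_distrib]
    congr 1
    refine sum_congr rfl fun j hj => ?_
    rw [hf i (j + 1) (by simp at hj; omega), Nat.add_sub_cancel, ← add_assoc, pow_succ,
      mul_neg_one, neg_smul]
  have swap : ∑ i ∈ range n, ∑ j ∈ Ico i n, (-1 : R) ^ (i + j) • f i (f j y) =
      ∑ j ∈ range n, ∑ i ∈ range (j + 1), (-1 : R) ^ (i + j) • f i (f j y) :=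
    sum_comm' fun i j => by simp only [mem_range, mem_Ico]; omega
  rw [expand, sum_congr rfl fun i hi => split i (mem_range.mp hi), sum_sub_distrib, swap]
  simp only [add_comm, sub_self, neg_zero]

end AlternatingFaceSum

theorem coboundaryZ_eq_alternatingFaceSum {H : Type*} [NormedAddCommGroup H]
    [InnerProductSpace ℂ H] (α : ℕ → H →ₗᵢ[ℂ] H) {k : ℤ} {n : ℕ} (hkn : k + 2 = n) :
    coboundaryZ α k = alternatingFaceSum (fun i => (α i).toLinearMap) n := by
  funext x
  have hn : (k + 2).toNat = n := by omega
  refine sum_congr (by rw [hn]) fun i hi => ?_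
  have sign : (-1 : ℂ) ^ (k + 1 - (i : ℤ)) = (-1 : ℂ) ^ (n + 1 + i) := by
    have : ((n + 1 + i : ℕ) : ℤ) = k + 1 - i + 2 * (i + 1) := by omega
    rw [← zpow_natCast, this, zpow_add₀ (by norm_num), zpow_mul]
    norm_num
  rw [sign]
  rfl

theorem cocycle_iff_coboundary_on_lower_level_general
    {H : Type*} [NormedAddCommGroup H] [InnerProductSpace ℂ H]
    (α : ℕ → H →ₗᵢ[ℂ] H)
    (hps : ∀ i j : ℕ, i < j → ∀ x : H, α j (α i x) = α i (α (j - 1) x))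
    (k : ℤ) (hk : -1 ≤ k) (x : H) (hx : ∀ i : ℕ, k - 1 < (i : ℤ) → α i x = x) :
    coboundaryZ α k x = 0 ↔
      ∃ y : H, (∀ i : ℕ, k - 1 < (i : ℤ) → α i y = y) ∧ x = coboundaryZ α (k - 1) y := by
  set n := (k + 1).toNat
  rw [coboundaryZ_eq_alternatingFaceSum α (n := n + 1) (by omega),
    coboundaryZ_eq_alternatingFaceSum α (n := n) (by omega)]
  constructor
  · intro cocycle
    refine ⟨x, hx, ?_⟩
    rwa [alternatingFaceSum_succ, LinearIsometry.coe_toLinearMap, hx n (by omega), sub_eq_zero]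
      at cocycle
  · rintro ⟨y, -, rfl⟩
    exact alternatingFaceSum_succ_alternatingFaceSum _ hps n y

/-- For an SCH (modelled via its partial shifts, with `x ∈ H^ℓ` expressed as
`α i x = x` for all `i > ℓ`): an element `x ∈ H^k` which already lies in `H^{k-1}` is a
`k`-cocycle if and only if it is a `k`-coboundary, i.e.
`H_c^k ∩ H^{k-1} = H_b^k ∩ H^{k-1}`. -/
theorem cocycle_iff_coboundary_on_lower_level
    {H : Type*} [NormedAddCommGroup H] [InnerProductSpace ℂ H] [CompleteSpace H]
    (α : ℕ → H →ₗᵢ[ℂ] H)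
    (hps : ∀ i j : ℕ, i < j → ∀ x : H, α j (α i x) = α i (α (j - 1) x))
    (k : ℤ) (hk : -1 ≤ k) (x : H) (hx : ∀ i : ℕ, k - 1 < (i : ℤ) → α i x = x) :
    coboundaryZ α k x = 0 ↔
      ∃ y : H, (∀ i : ℕ, k - 1 < (i : ℤ) → α i y = y) ∧ x = coboundaryZ α (k - 1) y :=
  cocycle_iff_coboundary_on_lower_level_general α hps k hk x hx
end

section
/- For an SCH, the (k+2)-cocycles that lie in H^k are exactly the k-cocycles: H_c^{k+2} ∩ H^k = H_c^k, and moreover H_c^k ⊂ H_b^{k+2}. -/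
/-! Flipping every sign of the sum for `∂^k` and adding the new top term gives
`∂^{k+1} = α_{k+2} - ∂^k`. On `H^k` the shifts `α_i` with `i > k` act trivially, so there
`∂^{k+1} = 1 - ∂^k` and `∂^{k+2} = 1 - (1 - ∂^k) = ∂^k`; in particular a `k`-cocycle `x`
satisfies `x = ∂^{k+1} x` with `x ∈ H^{k+1}`. -/

section Coboundary

variable {H : Type*} [NormedAddCommGroup H] [InnerProductSpace ℂ H] (α : ℕ → H →ₗᵢ[ℂ] H)

theorem coboundaryZ_add_one {k : ℤ} (hk : -2 ≤ k) (x : H) :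
    coboundaryZ α (k + 1) x = α (k + 2).toNat x - coboundaryZ α k x := by
  have hn : ((k + 2).toNat : ℤ) = k + 2 := Int.toNat_of_nonneg (by omega)
  have hsucc : (k + 1 + 2).toNat = (k + 2).toNat + 1 := by omega
  have hsign : ∀ i : ℕ, (-1 : ℂ) ^ (k + 1 + 1 - (i : ℤ)) = -(-1 : ℂ) ^ (k + 1 - (i : ℤ)) := by
    intro i
    rw [show k + 1 + 1 - (i : ℤ) = (k + 1 - i) + 1 by ring, zpow_add_one₀ (by norm_num)]
    simp
  have hlast : (-1 : ℂ) ^ (k + 1 + 1 - ((k + 2).toNat : ℤ)) = 1 := by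
    rw [hn, show k + 1 + 1 - (k + 2) = 0 by ring, zpow_zero]
  rw [coboundaryZ, coboundaryZ, hsucc, Finset.sum_range_succ, hlast, one_smul]
  simp only [hsign, neg_smul, Finset.sum_neg_distrib]
  abel

variable {α}

theorem coboundaryZ_add_one_of_fixed {k : ℤ} (hk : -2 ≤ k) {x : H}
    (hx : ∀ i : ℕ, k < i → α i x = x) :
    coboundaryZ α (k + 1) x = x - coboundaryZ α k x := by
  rw [coboundaryZ_add_one α hk, hx _ (by omega)]

theorem coboundaryZ_add_two_of_fixed {k : ℤ} (hk : -2 ≤ k) {x : H}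
    (hx : ∀ i : ℕ, k < i → α i x = x) :
    coboundaryZ α (k + 2) x = coboundaryZ α k x := by
  have hx' : ∀ i : ℕ, k + 1 < i → α i x = x := fun i hi => hx i (by omega)
  rw [show k + 2 = k + 1 + 1 by ring, coboundaryZ_add_one_of_fixed (by omega) hx',
    coboundaryZ_add_one_of_fixed hk hx, sub_sub_cancel]

end Coboundary

theorem cocycle_two_levels_up_general
    {H : Type*} [NormedAddCommGroup H] [InnerProductSpace ℂ H]
    (α : ℕ → H →ₗᵢ[ℂ] H)
    (k : ℤ) (hk : -1 ≤ k) (x : H) (hx : ∀ i : ℕ, k < (i : ℤ) → α i x = x) :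
    (coboundaryZ α (k + 2) x = 0 ↔ coboundaryZ α k x = 0) ∧
      (coboundaryZ α k x = 0 →
        ∃ y : H, (∀ i : ℕ, k + 1 < (i : ℤ) → α i y = y) ∧ x = coboundaryZ α (k + 1) y) := by
  refine ⟨by rw [coboundaryZ_add_two_of_fixed (by omega) hx], fun hcocycle => ?_⟩
  refine ⟨x, fun i hi => hx i (by omega), ?_⟩
  rw [coboundaryZ_add_one_of_fixed (by omega) hx, hcocycle, sub_zero]

/-- For an SCH (modelled via its partial shifts, with `x ∈ H^ℓ` expressed as
`α i x = x` for all `i > ℓ`): the `(k+2)`-cocycles lying in `H^k` are exactly the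
`k`-cocycles, `H_c^{k+2} ∩ H^k = H_c^k`, and moreover `H_c^k ⊆ H_b^{k+2}`. -/
theorem cocycle_two_levels_up
    {H : Type*} [NormedAddCommGroup H] [InnerProductSpace ℂ H] [CompleteSpace H]
    (α : ℕ → H →ₗᵢ[ℂ] H)
    (hps : ∀ i j : ℕ, i < j → ∀ x : H, α j (α i x) = α i (α (j - 1) x))
    (k : ℤ) (hk : -1 ≤ k) (x : H) (hx : ∀ i : ℕ, k < (i : ℤ) → α i x = x) :
    (coboundaryZ α (k + 2) x = 0 ↔ coboundaryZ α k x = 0) ∧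
      (coboundaryZ α k x = 0 →
        ∃ y : H, (∀ i : ℕ, k + 1 < (i : ℤ) → α i y = y) ∧ x = coboundaryZ α (k + 1) y) :=
  cocycle_two_levels_up_general α k hk x hx
end

section
/- Suppose (H_k, u_m)_{k,m} is a Hessenberg factorization for isometries (α_n), i.e., α_n = sot-lim_m u_{n+1}···u_m with u_m unitaries satisfying conditions (H1), (H2), (C). Then the following are equivalent: (1) u_{j+1} α_i = α_i u_j for all i < j; (2) u_{j+1} α_{j-1} = α_{j-1} u_j for all j ≥ 1; (3) u_j u_{j+1} u_j = u_{j+1} u_j u_{j+1} on the range of α_{j+1}, for all j ≥ 1. Moreover, any of these implies α_j α_i = α_i α_{j-1} for all i < j. -/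
/-- The finite product `u_a u_{a+1} ⋯ u_b` of the unitaries, applied to a vector:
`chainWord u a b x = u a (u (a+1) (⋯ (u b x)))` (the identity if `a > b`). -/
def chainWord {H : Type*} [NormedAddCommGroup H] [InnerProductSpace ℂ H]
    (u : ℕ → H ≃ₗᵢ[ℂ] H) (a b : ℕ) (x : H) : H :=
  (List.range' a (b + 1 - a)).foldr (fun i y => u i y) x

section Aux
variable {H : Type*} [NormedAddCommGroup H] [InnerProductSpace ℂ H]
variable (u : ℕ → H ≃ₗᵢ[ℂ] H)

lemma cw_empty {a b : ℕ} (h : b + 1 ≤ a) (x : H) : chainWord u a b x = x := by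
  unfold chainWord
  rw [Nat.sub_eq_zero_of_le h]
  rfl

lemma cw_cons {a b : ℕ} (h : a ≤ b) (x : H) :
    chainWord u a b x = u a (chainWord u (a + 1) b x) := by
  unfold chainWord
  have h1 : b + 1 - a = (b + 1 - (a + 1)) + 1 := by omega
  rw [h1, List.range'_succ]
  rfl

lemma cw_single (a : ℕ) (x : H) : chainWord u a a x = u a x := by
  rw [cw_cons u le_rfl, cw_empty u (by omega)]

lemma cw_split {a b c : ℕ} (h1 : a ≤ c + 1) (h2 : c ≤ b) (x : H) :
    chainWord u a b x = chainWord u a c (chainWord u (c + 1) b x) := by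
  unfold chainWord
  rw [← List.foldr_append]
  congr 1
  have h3 : c + 1 = a + 1 * (c + 1 - a) := by omega
  have h4 : b + 1 - a = (b + 1 - (c + 1)) + (c + 1 - a) := by omega
  rw [h4, Nat.add_comm (b + 1 - (c + 1)),
    ← List.range'_append (s := a) (m := c + 1 - a) (n := b + 1 - (c + 1)) (step := 1), ← h3]

lemma foldr_comm (c : ℕ) (l : List ℕ)
    (h : ∀ i ∈ l, ∀ y : H, u c (u i y) = u i (u c y)) (x : H) :
    u c (l.foldr (fun i y => u i y) x) = l.foldr (fun i y => u i y) (u c x) := by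
  induction l with
  | nil => rfl
  | cons a l ih =>
    simp only [List.foldr_cons]
    rw [h a (by simp), ih (fun i hi y => h i (List.mem_cons_of_mem _ hi) y)]

lemma foldr_mem (T : Submodule ℂ H) (l : List ℕ)
    (h : ∀ i ∈ l, ∀ y ∈ T, u i y ∈ T) (x : H) (hx : x ∈ T) :
    l.foldr (fun i y => u i y) x ∈ T := by
  induction l with
  | nil => exact hx
  | cons a l ih =>
    exact h a (by simp) _ (ih (fun i hi y hy => h i (List.mem_cons_of_mem _ hi) y hy))

end Aux

/-- The Hessenberg factorization lemma.  Here the tower `H_{-1} ⊂ H_0 ⊂ ⋯` is modelled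
by submodules `T m` with `T m = H_{m-1}` (so `T 0 = H_{-1}`) whose union is dense in the
ambient Hilbert space; `(u m)_{m ≥ 1}` are unitaries satisfying
(H1) `u k` fixes `H_{k-2} = T (k-1)` pointwise,
(H2) `u k` leaves `H_ℓ = T (ℓ+1)` invariant for `ℓ ≥ k - 1`, i.e. leaves `T m` invariant
for `m ≥ k`, and
(C) `u m` and `u n` commute for `|m - n| ≥ 2`;
and `(α n)` are the isometries determined by `α n = u_{n+1} ⋯ u_{k+1}` on `H_k = T (k+1)`
for `k ≥ n` and the identity on `H_k` for `k < n`.  Then the following are equivalent: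
(1) `u_{j+1} α_i = α_i u_j` for all `i < j`;
(2) `u_{j+1} α_{j-1} = α_{j-1} u_j` for all `j ≥ 1`;
(3) `u_j u_{j+1} u_j = u_{j+1} u_j u_{j+1}` on the range of `α_{j+1}`, for all `j ≥ 1`;
and moreover any of them implies that `(α n)` is a sequence of partial shifts,
`α_j α_i = α_i α_{j-1}` for all `i < j`. -/
theorem hessenberg_braided_equivalences
    {H : Type*} [NormedAddCommGroup H] [InnerProductSpace ℂ H] [CompleteSpace H]
    (u : ℕ → H ≃ₗᵢ[ℂ] H) (T : ℕ → Submodule ℂ H) (α : ℕ → H →ₗᵢ[ℂ] H)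
    (htower : Monotone T)
    (hdense : Dense (↑(⨆ m, T m) : Set H))
    (hH1 : ∀ k : ℕ, 1 ≤ k → ∀ x ∈ T (k - 1), u k x = x)
    (hH2 : ∀ k m : ℕ, 1 ≤ k → k ≤ m → ∀ x ∈ T m, u k x ∈ T m)
    (hC : ∀ m n : ℕ, m + 2 ≤ n → ∀ x : H, u m (u n x) = u n (u m x))
    (hα_id : ∀ n m : ℕ, m ≤ n → ∀ x ∈ T m, α n x = x)
    (hα_word : ∀ n k : ℕ, n ≤ k → ∀ x ∈ T (k + 1), α n x = chainWord u (n + 1) (k + 1) x) :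
    ((∀ i j : ℕ, i < j → ∀ x : H, u (j + 1) (α i x) = α i (u j x)) ↔
      (∀ j : ℕ, 1 ≤ j → ∀ x : H, u (j + 1) (α (j - 1) x) = α (j - 1) (u j x))) ∧
    ((∀ j : ℕ, 1 ≤ j → ∀ x : H, u (j + 1) (α (j - 1) x) = α (j - 1) (u j x)) ↔
      (∀ j : ℕ, 1 ≤ j → ∀ x : H,
        u j (u (j + 1) (u j (α (j + 1) x))) = u (j + 1) (u j (u (j + 1) (α (j + 1) x))))) ∧
    ((∀ i j : ℕ, i < j → ∀ x : H, u (j + 1) (α i x) = α i (u j x)) →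
      ∀ i j : ℕ, i < j → ∀ x : H, α j (α i x) = α i (α (j - 1) x)) := by
  -- ## basic consequences of the axioms
  have hfix' : ∀ k m : ℕ, 1 ≤ k → m + 1 ≤ k → ∀ x ∈ T m, u k x = x := by
    intro k m hk hmk x hx
    exact hH1 k hk x (htower (by omega) hx)
  have hpres : ∀ k m : ℕ, 1 ≤ k → ∀ x ∈ T m, u k x ∈ T m := by
    intro k m hk x hx
    rcases le_or_gt k m with h | h
    · exact hH2 k m hk h x hx
    · rw [hfix' k m hk h x hx]; exact hx
  have cw_mem : ∀ a b m : ℕ, 1 ≤ a → ∀ x ∈ T m, chainWord u a b x ∈ T m := by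
    intro a b m ha x hx
    refine foldr_mem u (T m) _ (fun i hi y hy => ?_) x hx
    have h1 : a ≤ i := (List.mem_range'_1.mp hi).1
    exact hpres i m (by omega) y hy
  have hαW : ∀ n m : ℕ, ∀ x ∈ T m, α n x = chainWord u (n + 1) m x := by
    intro n m x hx
    rcases le_or_gt m n with h | h
    · rw [hα_id n m h x hx, cw_empty u (by omega)]
    · have hm : m - 1 + 1 = m := by omega
      have h2 := hα_word n (m - 1) (by omega) x (by rw [hm]; exact hx)
      rwa [hm] at h2
  have hαmem : ∀ n m : ℕ, ∀ x ∈ T m, α n x ∈ T m := by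
    intro n m x hx
    rw [hαW n m x hx]
    exact cw_mem (n + 1) m m (by omega) x hx
  -- the "u_j fixes T j pointwise" property and its consequences
  have hfix_of : (∀ j : ℕ, 1 ≤ j → ∀ x ∈ T j, u j x = x) →
      ∀ k m : ℕ, 1 ≤ k → m ≤ k → ∀ x ∈ T m, u k x = x := by
    intro hJ k m hk hmk x hx
    rcases eq_or_lt_of_le hmk with h | h
    · exact hJ k hk x (h ▸ hx)
    · exact hfix' k m hk h x hx
  have hαfix : (∀ j : ℕ, 1 ≤ j → ∀ x ∈ T j, u j x = x) →
      ∀ n m : ℕ, m ≤ n + 1 → ∀ x ∈ T m, α n x = x := by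
    intro hJ n m hm x hx
    rw [hαW n m x hx]
    rcases eq_or_lt_of_le hm with h | h
    · subst h
      rw [cw_single]
      exact hJ (n + 1) (by omega) x hx
    · rw [cw_empty u (by omega)]
  -- the fixing property follows from condition (2)
  have hL2 : (∀ j : ℕ, 1 ≤ j → ∀ x : H, u (j + 1) (α (j - 1) x) = α (j - 1) (u j x)) →
      ∀ j : ℕ, 1 ≤ j → ∀ x ∈ T j, u j x = x := by
    intro h2 j hj x hx
    have hux : u j x ∈ T j := hH2 j j hj le_rfl x hx
    have hj1 : j - 1 + 1 = j := by omega
    have e1 : α (j - 1) x = u j x := by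
      rw [hαW (j - 1) j x hx, hj1, cw_single]
    have e2 : α (j - 1) (u j x) = u j (u j x) := by
      rw [hαW (j - 1) j _ hux, hj1, cw_single]
    have h := h2 j hj x
    rw [e1, e2, hfix' (j + 1) j (by omega) (by omega) _ hux] at h
    exact ((u j).injective h).symm
  -- the fixing property follows from condition (3)
  have hL3 : (∀ j : ℕ, 1 ≤ j → ∀ x : H,
        u j (u (j + 1) (u j (α (j + 1) x))) = u (j + 1) (u j (u (j + 1) (α (j + 1) x)))) →
      ∀ j : ℕ, 1 ≤ j → ∀ x ∈ T j, u j x = x := by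
    intro h3 j hj x hx
    have hux : u j x ∈ T j := hH2 j j hj le_rfl x hx
    have h := h3 j hj x
    rw [hα_id (j + 1) j (by omega) x hx,
      hfix' (j + 1) j (by omega) (by omega) x hx,
      hfix' (j + 1) j (by omega) (by omega) _ hux] at h
    exact (u j).injective h
  -- extension from the dense union of the T m's
  have hext : ∀ (f g : H → H), Continuous f → Continuous g →
      (∀ m : ℕ, ∀ x ∈ T m, f x = g x) → ∀ x : H, f x = g x := by
    intro f g hf hg h x
    have hfg : f = g := by
      refine Continuous.ext_on hdense hf hg ?_
      intro y hy
      obtain ⟨m, hm⟩ := (Submodule.mem_iSup_of_directed T htower.directed_le).mp hy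
      exact h m y hm
    exact congrFun hfg x
  -- (1) → (2)
  have hA12 : (∀ i j : ℕ, i < j → ∀ x : H, u (j + 1) (α i x) = α i (u j x)) →
      ∀ j : ℕ, 1 ≤ j → ∀ x : H, u (j + 1) (α (j - 1) x) = α (j - 1) (u j x) :=
    fun h1 j hj x => h1 (j - 1) j (by omega) x
  -- (2) → (1)
  have hA21 : (∀ j : ℕ, 1 ≤ j → ∀ x : H, u (j + 1) (α (j - 1) x) = α (j - 1) (u j x)) →
      ∀ i j : ℕ, i < j → ∀ x : H, u (j + 1) (α i x) = α i (u j x) := by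
    intro h2 i j hij
    have hJ := hL2 h2
    have hfixAll := hfix_of hJ
    refine hext (fun x => u (j + 1) (α i x)) (fun x => α i (u j x))
      ((u (j + 1)).continuous.comp (α i).continuous)
      ((α i).continuous.comp (u j).continuous) ?_
    intro m x hx
    rcases le_or_gt m j with hmj | hmj
    · have e1 : u j x = x := hfixAll j m (by omega) hmj x hx
      have e2 : u (j + 1) (α i x) = α i x :=
        hfixAll (j + 1) m (by omega) (by omega) _ (hαmem i m x hx)
      rw [e1, e2]
    · have hux : u j x ∈ T m := hpres j m (by omega) x hx
      have hji : j - 1 + 1 = j := by omega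
      have hw : ∀ y ∈ T m, α (j - 1) y = chainWord u j m y := by
        intro y hy
        rw [hαW (j - 1) m y hy, hji]
      have hsplit : ∀ y : H,
          chainWord u (i + 1) m y = chainWord u (i + 1) (j - 1) (chainWord u j m y) := by
        intro y
        have h := cw_split u (show i + 1 ≤ j - 1 + 1 by omega) (show j - 1 ≤ m by omega) y
        rwa [hji] at h
      have hcomm : ∀ y : H, u (j + 1) (chainWord u (i + 1) (j - 1) y)
          = chainWord u (i + 1) (j - 1) (u (j + 1) y) := by
        intro y
        unfold chainWord
        refine foldr_comm u (j + 1) _ (fun k hk z => ?_) y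
        have hk' := List.mem_range'_1.mp hk
        exact (hC k (j + 1) (by omega) z).symm
      calc u (j + 1) (α i x)
          = u (j + 1) (chainWord u (i + 1) (j - 1) (α (j - 1) x)) := by
            rw [hαW i m x hx, hsplit x, ← hw x hx]
        _ = chainWord u (i + 1) (j - 1) (u (j + 1) (α (j - 1) x)) := hcomm _
        _ = chainWord u (i + 1) (j - 1) (α (j - 1) (u j x)) := by rw [h2 j (by omega) x]
        _ = chainWord u (i + 1) (j - 1) (chainWord u j m (u j x)) := by rw [hw _ hux]
        _ = chainWord u (i + 1) m (u j x) := (hsplit _).symm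
        _ = α i (u j x) := (hαW i m _ hux).symm
  -- (2) → (3)
  have hB23 : (∀ j : ℕ, 1 ≤ j → ∀ x : H, u (j + 1) (α (j - 1) x) = α (j - 1) (u j x)) →
      ∀ j : ℕ, 1 ≤ j → ∀ x : H,
        u j (u (j + 1) (u j (α (j + 1) x))) = u (j + 1) (u j (u (j + 1) (α (j + 1) x))) := by
    intro h2 j hj
    have hJ := hL2 h2
    have hfixAll := hfix_of hJ
    refine hext (fun x => u j (u (j + 1) (u j (α (j + 1) x))))
      (fun x => u (j + 1) (u j (u (j + 1) (α (j + 1) x))))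
      ((u j).continuous.comp ((u (j + 1)).continuous.comp
        ((u j).continuous.comp (α (j + 1)).continuous)))
      ((u (j + 1)).continuous.comp ((u j).continuous.comp
        ((u (j + 1)).continuous.comp (α (j + 1)).continuous))) ?_
    intro m x hx
    rcases le_or_gt m j with hmj | hmj
    · have ha : α (j + 1) x = x := hα_id (j + 1) m (by omega) x hx
      have e1 : u j x = x := hfixAll j m (by omega) hmj x hx
      have e2 : u (j + 1) x = x := hfixAll (j + 1) m (by omega) (by omega) x hx
      rw [ha, e1, e2, e1, e2]
    · have hux : u j x ∈ T m := hpres j m (by omega) x hx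
      have hji : j - 1 + 1 = j := by omega
      have hw : ∀ y ∈ T m,
          α (j - 1) y = u j (u (j + 1) (chainWord u (j + 2) m y)) := by
        intro y hy
        rw [hαW (j - 1) m y hy, hji, cw_cons u (show j ≤ m by omega),
          cw_cons u (show j + 1 ≤ m by omega)]
      have hy : α (j + 1) x = chainWord u (j + 2) m x := hαW (j + 1) m x hx
      have hcm : ∀ z : H,
          chainWord u (j + 2) m (u j z) = u j (chainWord u (j + 2) m z) := by
        intro z
        unfold chainWord
        refine (foldr_comm u j _ (fun k hk w => ?_) z).symm
        have hk' := List.mem_range'_1.mp hk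
        exact hC j k (by omega) w
      have key := h2 j hj x
      rw [hw x hx, hw _ hux, hcm x] at key
      rw [hy]
      exact key.symm
  -- (3) → (2)
  have hB32 : (∀ j : ℕ, 1 ≤ j → ∀ x : H,
        u j (u (j + 1) (u j (α (j + 1) x))) = u (j + 1) (u j (u (j + 1) (α (j + 1) x)))) →
      ∀ j : ℕ, 1 ≤ j → ∀ x : H, u (j + 1) (α (j - 1) x) = α (j - 1) (u j x) := by
    intro h3 j hj
    have hJ := hL3 h3
    have hfixAll := hfix_of hJ
    refine hext (fun x => u (j + 1) (α (j - 1) x)) (fun x => α (j - 1) (u j x))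
      ((u (j + 1)).continuous.comp (α (j - 1)).continuous)
      ((α (j - 1)).continuous.comp (u j).continuous) ?_
    intro m x hx
    rcases le_or_gt m j with hmj | hmj
    · have hαf : α (j - 1) x = x := hαfix hJ (j - 1) m (by omega) x hx
      have e1 : u j x = x := hfixAll j m (by omega) hmj x hx
      have e2 : u (j + 1) x = x := hfixAll (j + 1) m (by omega) (by omega) x hx
      rw [hαf, e1, hαf, e2]
    · have hux : u j x ∈ T m := hpres j m (by omega) x hx
      have hji : j - 1 + 1 = j := by omega
      have hw : ∀ y ∈ T m,
          α (j - 1) y = u j (u (j + 1) (chainWord u (j + 2) m y)) := by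
        intro y hy
        rw [hαW (j - 1) m y hy, hji, cw_cons u (show j ≤ m by omega),
          cw_cons u (show j + 1 ≤ m by omega)]
      have hy : α (j + 1) x = chainWord u (j + 2) m x := hαW (j + 1) m x hx
      have hcm : ∀ z : H,
          chainWord u (j + 2) m (u j z) = u j (chainWord u (j + 2) m z) := by
        intro z
        unfold chainWord
        refine (foldr_comm u j _ (fun k hk w => ?_) z).symm
        have hk' := List.mem_range'_1.mp hk
        exact hC j k (by omega) w
      have key := h3 j hj x
      rw [hy] at key
      rw [hw x hx, hw _ hux, hcm x]
      exact key.symm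
  -- the shift-intertwining consequence of (1)
  have hshift : (∀ i j : ℕ, i < j → ∀ x : H, u (j + 1) (α i x) = α i (u j x)) →
      ∀ (i n a : ℕ), i < a → ∀ x : H,
        (List.range' (a + 1) n).foldr (fun k y => u k y) (α i x)
          = α i ((List.range' a n).foldr (fun k y => u k y) x) := by
    intro h1 i n
    induction n with
    | zero => intro a _ x; rfl
    | succ n ih =>
      intro a ha x
      rw [List.range'_succ, List.range'_succ]
      simp only [List.foldr_cons]
      rw [ih (a + 1) (by omega), h1 i a ha]
  refine ⟨⟨hA12, hA21⟩, ⟨hB23, hB32⟩, ?_⟩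
  -- (1) → partial shifts
  intro h1 i j hij
  have h2 := hA12 h1
  have hJ := hL2 h2
  refine hext (fun x => α j (α i x)) (fun x => α i (α (j - 1) x))
    ((α j).continuous.comp (α i).continuous)
    ((α i).continuous.comp (α (j - 1)).continuous) ?_
  intro m x hx
  rcases le_or_gt m j with hmj | hmj
  · have e1 : α j (α i x) = α i x := hα_id j m hmj _ (hαmem i m x hx)
    have e2 : α (j - 1) x = x := hαfix hJ (j - 1) m (by omega) x hx
    rw [e1, e2]
  · have hαm := hαmem i m x hx
    have hji : j - 1 + 1 = j := by omega
    have en : m + 1 - (j + 1) = m - j := by omega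
    have en2 : m - 1 + 1 - j = m - j := by omega
    have hm1 : m - 1 + 1 = m := by omega
    have hsnoc : chainWord u j m x = chainWord u j (m - 1) (u m x) := by
      rw [cw_split u (show j ≤ m - 1 + 1 by omega) (show m - 1 ≤ m by omega) x, hm1,
        cw_single]
    calc α j (α i x) = chainWord u (j + 1) m (α i x) := hαW j m _ hαm
      _ = α i ((List.range' j (m - j)).foldr (fun k y => u k y) x) := by
          unfold chainWord
          rw [en]
          exact hshift h1 i (m - j) j hij x
      _ = α i (chainWord u j (m - 1) x) := by unfold chainWord; rw [en2]
      _ = α i (chainWord u j m x) := by rw [hsnoc, hJ m (by omega) x hx]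
      _ = α i (α (j - 1) x) := by rw [hαW (j - 1) m x hx, hji]
end

section
/- A bijection λ : u → v between finite subsets of ℕ satisfying (for all x < y in u) 0 ≤ λ(x) − x ≤ λ(y) − y extends to a strictly increasing map f : ℕ → ℕ with f|_u = λ. -/
/-!
Extend `l` by `f n = n + d n`, where the offset `d n` is the largest value of `l x - x` over
the points `x ≤ n` of `u`. The offset is monotone, so `f` is strictly increasing, and the
hypothesis that `l x - x` increases along `u` makes `d x = l x - x` at every `x ∈ u`.
-/

namespace Finset

variable {α β : Type*} [LinearOrder α] [SemilatticeSup β] [OrderBot β]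

def prefixSup (u : Finset α) (g : α → β) (n : α) : β :=
  {x ∈ u | x ≤ n}.sup g

theorem monotone_prefixSup (u : Finset α) (g : α → β) : Monotone (prefixSup u g) :=
  fun _ _ hnm => sup_mono (monotone_filter_right u fun _ _ hx => hx.trans hnm)

theorem prefixSup_eq_of_monotoneOn {u : Finset α} {g : α → β} (hg : MonotoneOn g u)
    {x : α} (hx : x ∈ u) : prefixSup u g x = g x := by
  refine le_antisymm (Finset.sup_le fun y hy => ?_) (le_sup (mem_filter.mpr ⟨hx, le_rfl⟩))
  obtain ⟨hyu, hyx⟩ := mem_filter.mp hy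
  exact hg hyu hx hyx

end Finset

open Finset in
theorem morphism_extends_to_strictMono_general
    (u : Finset ℕ) (l : ℕ → ℕ)
    (hge : ∀ x ∈ u, x ≤ l x)
    (hdiff : ∀ x ∈ u, ∀ y ∈ u, x < y → l x - x ≤ l y - y) :
    ∃ f : ℕ → ℕ, StrictMono f ∧ ∀ x ∈ u, f x = l x := by
  have hmono : MonotoneOn (fun x => l x - x) u := fun x hx y hy hxy =>
    hxy.eq_or_lt.elim (fun h => h ▸ le_rfl) (hdiff x hx y hy)
  refine ⟨fun n => n + prefixSup u (fun x => l x - x) n,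
    strictMono_id.add_monotone (monotone_prefixSup _ _), fun x hx => ?_⟩
  have hxl := hge x hx
  simp only [prefixSup_eq_of_monotoneOn hmono hx]
  omega

/-- A bijection `l : u → v` between finite subsets of `ℕ` satisfying
`0 ≤ l x − x ≤ l y − y` for all `x < y` in `u` extends to a strictly increasing map
`f : ℕ → ℕ` with `f|_u = l`. -/
theorem morphism_extends_to_strictMono
    (u v : Finset ℕ) (l : ℕ → ℕ) (hbij : Set.BijOn l ↑u ↑v)
    (hge : ∀ x ∈ u, x ≤ l x)
    (hdiff : ∀ x ∈ u, ∀ y ∈ u, x < y → l x - x ≤ l y - y) :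
    ∃ f : ℕ → ℕ, StrictMono f ∧ ∀ x ∈ u, f x = l x :=
  morphism_extends_to_strictMono_general u l hge hdiff
end

section
/- Let (Y_k, δ_i) be an SCS with associated injective partial shifts α_i on Y_∞, and for y ∈ Y_∞ define the normal label χ̂(y) : ℕ → {0,1} by χ̂(y)_n = 0 if α_n(y) = α_{n+1}(y) and χ̂(y)_n = 1 otherwise. Then χ̂(α_j(y)) = ε_j(χ̂(y)), where ε_j inserts a 0 at position j. -/
/-- The insertion operation `ε_j` on labels, here modelled as predicates
`χ : ℕ → Prop` (`False` stands for `0` and `True` for `1`): it inserts a `0`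
at position `j`. -/
def insertZeroP (j : ℕ) (χ : ℕ → Prop) : ℕ → Prop :=
  fun i => if i < j then χ i else if i = j then False else χ (i - 1)

/-- The normal label of an element `y`, determined by the partial shifts:
`χ̂(y)_n = 0` iff `α n y = α (n+1) y`. -/
def normalLabel {Y : Type*} (α : ℕ → Y → Y) (y : Y) : ℕ → Prop :=
  fun n => α n y ≠ α (n + 1) y

/-!
Rewritten as `α (j + 1) ∘ α i = α i ∘ α j` for `i ≤ j`, the shift relation moves `α j` past
`α n` and `α (n + 1)`, which is then cancelled by injectivity; at `n = j` the same relation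
with `i = j` forces `α j (α j y) = α (j + 1) (α j y)`, i.e. the inserted `0`.
-/

section PartialShift

variable {Y : Type*} {α : ℕ → Y → Y}

theorem shift_succ_shift_of_le
    (hps : ∀ i j : ℕ, i < j → ∀ y : Y, α j (α i y) = α i (α (j - 1) y))
    {i j : ℕ} (hij : i ≤ j) (y : Y) : α (j + 1) (α i y) = α i (α j y) :=
  hps i (j + 1) (Nat.lt_succ_of_le hij) y

theorem normalLabel_shift_of_lt (hinj : ∀ i : ℕ, Function.Injective (α i))
    (hps : ∀ i j : ℕ, i < j → ∀ y : Y, α j (α i y) = α i (α (j - 1) y))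
    {n j : ℕ} (hnj : n < j) (y : Y) :
    normalLabel α (α j y) n ↔ normalLabel α y n := by
  simp only [normalLabel]
  rw [← shift_succ_shift_of_le hps hnj.le, ← shift_succ_shift_of_le hps hnj, (hinj _).ne_iff]

theorem not_normalLabel_shift_self
    (hps : ∀ i j : ℕ, i < j → ∀ y : Y, α j (α i y) = α i (α (j - 1) y))
    (j : ℕ) (y : Y) : ¬ normalLabel α (α j y) j :=
  not_not.mpr (shift_succ_shift_of_le hps le_rfl y).symm

theorem normalLabel_shift_succ_of_le (hinj : ∀ i : ℕ, Function.Injective (α i))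
    (hps : ∀ i j : ℕ, i < j → ∀ y : Y, α j (α i y) = α i (α (j - 1) y))
    {m j : ℕ} (hjm : j ≤ m) (y : Y) :
    normalLabel α (α j y) (m + 1) ↔ normalLabel α y m := by
  simp only [normalLabel]
  rw [shift_succ_shift_of_le hps hjm, shift_succ_shift_of_le hps (hjm.trans m.le_succ),
    (hinj _).ne_iff]

end PartialShift

theorem normalLabel_of_shift_general
    {Y : Type*} (α : ℕ → Y → Y)
    (hinj : ∀ i : ℕ, Function.Injective (α i))
    (hps : ∀ i j : ℕ, i < j → ∀ y : Y, α j (α i y) = α i (α (j - 1) y))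
    (y : Y) (j : ℕ) :
    normalLabel α (α j y) = insertZeroP j (normalLabel α y) := by
  funext n
  unfold insertZeroP
  split_ifs with hlt heq
  · exact propext (normalLabel_shift_of_lt hinj hps hlt y)
  · subst heq
    exact propext (iff_false_intro (not_normalLabel_shift_self hps n y))
  · obtain ⟨m, rfl⟩ : ∃ m, n = m + 1 := Nat.exists_eq_succ_of_ne_zero (by omega)
    exact propext (normalLabel_shift_succ_of_le hinj hps (by omega) y)

/-- Let `(Y_k, δ_i)` be an SCS (modelled by its tower of subsets `Yk` of `Y_∞`, with
`Yk k = Y_k`, covering `Y_∞`, to which the injective partial shifts `α i` are adapted and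
with `Y_{k}` fixed pointwise by `α n` for `n > k`).  Then the normal label satisfies
`χ̂(α_j y) = ε_j (χ̂ y)`. -/
theorem normalLabel_of_shift
    {Y : Type*} (α : ℕ → Y → Y) (Yk : ℕ → Set Y)
    (hinj : ∀ i : ℕ, Function.Injective (α i))
    (hps : ∀ i j : ℕ, i < j → ∀ y : Y, α j (α i y) = α i (α (j - 1) y))
    (htower : Monotone Yk)
    (hcover : ∀ y : Y, ∃ k : ℕ, y ∈ Yk k)
    (hadapted : ∀ (i k : ℕ), Set.MapsTo (α i) (Yk k) (Yk (k + 1)))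
    (hfix : ∀ (k n : ℕ), k < n → ∀ y ∈ Yk k, α n y = y)
    (y : Y) (j : ℕ) :
    normalLabel α (α j y) = insertZeroP j (normalLabel α y) :=
  normalLabel_of_shift_general α hinj hps y j
end

section
/- Let (ι_n)_{n≥0} be a spreadable sequence of isometries from a Hilbert space K into a Hilbert space H, i.e., ι_j^* ι_i = C for all i < j with C independent of i, j. Then C ≥ 0: for all x ∈ K, ⟨x, C x⟩ ≥ 0. In fact ⟨x, Cx⟩ = ‖Qι_0(x)‖² where Q is the orthogonal projection onto the closed subspace of vectors fixed by the associated shift α_0. -/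
open Finset Filter Topology

local notation "⟪" x ", " y "⟫" => @inner ℂ _ _ x y

lemma iterFixed {H : Type*} [NormedAddCommGroup H] [InnerProductSpace ℂ H]
    (α : H →ₗᵢ[ℂ] H) {v : H} (hv : α v = v) (j : ℕ) : (⇑α)^[j] v = v := by
  induction j with
  | zero => rfl
  | succ n ih => rw [Function.iterate_succ_apply', ih, hv]

lemma iterInner {H : Type*} [NormedAddCommGroup H] [InnerProductSpace ℂ H]
    (α : H →ₗᵢ[ℂ] H) (j : ℕ) (a b : H) : ⟪(⇑α)^[j] a, (⇑α)^[j] b⟫ = ⟪a, b⟫ := by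
  induction j with
  | zero => rfl
  | succ n ih => rw [Function.iterate_succ_apply', Function.iterate_succ_apply',
      α.inner_map_map, ih]

lemma iterNorm {H : Type*} [NormedAddCommGroup H] [InnerProductSpace ℂ H]
    (α : H →ₗᵢ[ℂ] H) (j : ℕ) (a : H) : ‖(⇑α)^[j] a‖ = ‖a‖ := by
  induction j with
  | zero => rfl
  | succ n ih => rw [Function.iterate_succ_apply', α.norm_map, ih]

lemma rangeInter (N M : ℕ) : range N ∩ range M = range (min N M) := by
  ext i; simp [lt_min_iff]

section key
variable {H : Type*} [NormedAddCommGroup H] [InnerProductSpace ℂ H] [CompleteSpace H]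
  (α : H →ₗᵢ[ℂ] H) (w : H) (d : ℂ)

set_option maxHeartbeats 1000000 in
lemma keyZero
    (hd : ∀ j : ℕ, 1 ≤ j → ⟪(⇑α)^[j] w, w⟫ = d)
    (horth : ∀ v : H, α v = v → ⟪w, v⟫ = 0) :
    d = 0 := by
  set u : ℕ → H := fun j => (⇑α)^[j] w with hu
  set s : ℕ → H := fun N => ∑ j ∈ range N, u j with hs
  set v : ℕ → H := fun N => ((N : ℂ))⁻¹ • s N with hv
  set r : ℝ := d.re with hr
  set a : ℝ := ‖w‖ ^ 2 - r with ha
  -- cross inner products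
  have huij : ∀ i j : ℕ, j < i → ⟪u i, u j⟫ = d := by
    intro i j hij
    have h2 : ⟪u i, u j⟫ = ⟪(⇑α)^[i - j] w, w⟫ := by
      show ⟪(⇑α)^[i] w, (⇑α)^[j] w⟫ = _
      conv_lhs => rw [show i = j + (i - j) by omega]
      rw [Function.iterate_add_apply, iterInner]
    rw [h2]; exact hd _ (by omega)
  have hre : ∀ i j : ℕ, (⟪u i, u j⟫).re = if i = j then ‖w‖ ^ 2 else r := by
    intro i j
    rcases lt_trichotomy i j with h | h | h
    · have h2 : ⟪u i, u j⟫ = (starRingEnd ℂ) d := by rw [← inner_conj_symm, huij j i h]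
      rw [h2]; simp [if_neg h.ne, hr]
    · subst h
      have h2 := inner_self_eq_norm_sq (𝕜 := ℂ) (u i)
      have h3 : ‖u i‖ = ‖w‖ := iterNorm α i w
      simp only [RCLike.re_to_complex] at h2
      rw [if_pos rfl, h2, h3]
    · rw [huij i j h, if_neg h.ne', hr]
  -- real part of inner products of partial sums
  have harith : ∀ N M : ℕ,
      (∑ i ∈ range N, ∑ j ∈ range M, if i = j then ‖w‖ ^ 2 else r)
        = (N * M : ℝ) * r + (min N M : ℝ) * a := by
    intro N M
    have h1 : ∀ i j : ℕ, (if i = j then ‖w‖ ^ 2 else r) = r + if i = j then a else 0 := by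
      intro i j; split <;> simp [ha]
    simp only [h1, Finset.sum_add_distrib, Finset.sum_const, Finset.card_range,
      Finset.sum_ite_eq, nsmul_eq_mul]
    rw [Finset.sum_ite_mem, rangeInter, Finset.sum_const, Finset.card_range, nsmul_eq_mul]
    push_cast
    ring
  have hss : ∀ N M : ℕ, (⟪s N, s M⟫).re = (N * M : ℝ) * r + (min N M : ℝ) * a := by
    intro N M
    have h1 : ⟪s N, s M⟫ = ∑ i ∈ range N, ∑ j ∈ range M, ⟪u i, u j⟫ := by
      rw [hs]; rw [sum_inner]
      exact Finset.sum_congr rfl fun i _ => inner_sum _ _ _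
    rw [h1, Complex.re_sum]
    simp only [Complex.re_sum, hre]
    exact harith N M

  -- norms of partial sums
  have hnorm_s : ∀ N : ℕ, ‖s N‖ ^ 2 = (N : ℝ) ^ 2 * r + N * a := by
    intro N
    have h2 := inner_self_eq_norm_sq (𝕜 := ℂ) (s N)
    simp only [RCLike.re_to_complex] at h2
    rw [← h2, hss]
    simp only [min_self]
    ring
  have hinner_vv : ∀ N M : ℕ,
      (⟪v N, v M⟫).re = (N : ℝ)⁻¹ * (M : ℝ)⁻¹ * (⟪s N, s M⟫).re := by
    intro N M
    rw [hv]
    simp only [inner_smul_left, inner_smul_right, map_inv₀, Complex.conj_natCast]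
    rw [show ((N : ℂ))⁻¹ = (((N : ℝ)⁻¹ : ℝ) : ℂ) by push_cast; ring,
      show ((M : ℂ))⁻¹ = (((M : ℝ)⁻¹ : ℝ) : ℂ) by push_cast; ring,
      ← mul_assoc, ← Complex.ofReal_mul, Complex.re_ofReal_mul]
    ring
  have hnorm_v : ∀ N : ℕ, ‖v N‖ ^ 2 = ((N : ℝ)⁻¹) ^ 2 * ‖s N‖ ^ 2 := by
    intro N
    rw [hv]
    simp only [norm_smul, norm_inv, Complex.norm_natCast]
    ring
  -- distance formula
  have hvv : ∀ N M : ℕ, 1 ≤ N → 1 ≤ M →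
      ‖v N - v M‖ ^ 2 = a * ((N : ℝ) + M - 2 * min N M) / (N * M) := by
    intro N M hN hM
    have hN0 : (N : ℝ) ≠ 0 := by positivity
    have hM0 : (M : ℝ) ≠ 0 := by positivity
    have h1 := norm_sub_sq (𝕜 := ℂ) (v N) (v M)
    simp only [RCLike.re_to_complex] at h1
    rw [h1, hinner_vv, hnorm_v, hnorm_v, hnorm_s, hnorm_s, hss]
    have hmin : (min N M : ℝ) = min (N : ℝ) (M : ℝ) := by push_cast; ring_nf
    rw [hmin]
    rcases le_total (N : ℝ) (M : ℝ) with h | h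
    · rw [min_eq_left h]; field_simp; rw [show ((min N M : ℕ) : ℝ) = N by rw [min_eq_left (by exact_mod_cast h : N ≤ M)]]; ring
    · rw [min_eq_right h]; field_simp; rw [show ((min N M : ℕ) : ℝ) = M by rw [min_eq_right (by exact_mod_cast h : M ≤ N)]]; ring
  -- a is nonnegative
  have ha0 : (0 : ℝ) ≤ a := by
    have h1 := hvv 1 2 le_rfl one_le_two
    have h2 : (0 : ℝ) ≤ ‖v 1 - v 2‖ ^ 2 := by positivity
    rw [h1] at h2
    norm_num at h2
    linarith
  -- Cauchy sequence
  have hcauchy : CauchySeq (fun n => v (n + 1)) := by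
    apply cauchySeq_of_le_tendsto_0 (b := fun N : ℕ => Real.sqrt (2 * a / (N + 1)))
    · intro n m N hn hm
      rw [dist_eq_norm]
      have hn' : (N : ℝ) ≤ (n : ℝ) := by exact_mod_cast hn
      have hm' : (N : ℝ) ≤ (m : ℝ) := by exact_mod_cast hm
      have hp : ((N : ℝ) + 1) ≤ ((n + 1 : ℕ) : ℝ) := by push_cast; linarith
      have hq : ((N : ℝ) + 1) ≤ ((m + 1 : ℕ) : ℝ) := by push_cast; linarith
      have hsq : ‖v (n + 1) - v (m + 1)‖ ^ 2 ≤ 2 * a / (N + 1) := by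
        rw [hvv (n + 1) (m + 1) (by omega) (by omega)]
        set p : ℝ := ((n + 1 : ℕ) : ℝ) with hp'
        set q : ℝ := ((m + 1 : ℕ) : ℝ) with hq'
        have hpp : (0 : ℝ) < p := by positivity
        have hqq : (0 : ℝ) < q := by positivity
        have hNN : (0 : ℝ) < (N : ℝ) + 1 := by positivity
        have hmin2 : (min (n + 1) (m + 1) : ℕ) • (1 : ℝ) ≥ 0 := by positivity
        have hminle : (0 : ℝ) ≤ ((min (n + 1) (m + 1) : ℕ) : ℝ) := by positivity
        rw [div_le_div_iff₀ (by positivity) hNN]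
        have h5 : a * (p + q) * ((N : ℝ) + 1) ≤ 2 * a * (p * q) := by
          nlinarith [mul_le_mul_of_nonneg_left hp ha0, mul_le_mul_of_nonneg_left hq ha0]
        nlinarith [mul_nonneg ha0 hminle, mul_nonneg (mul_nonneg ha0 hminle) hNN.le]
      have hnn : (0 : ℝ) ≤ ‖v (n + 1) - v (m + 1)‖ := norm_nonneg _
      calc ‖v (n + 1) - v (m + 1)‖ = Real.sqrt (‖v (n + 1) - v (m + 1)‖ ^ 2) := by
              rw [Real.sqrt_sq hnn]
        _ ≤ Real.sqrt (2 * a / (N + 1)) := Real.sqrt_le_sqrt hsq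
    · have h1 : Tendsto (fun N : ℕ => 2 * a / (N + 1)) atTop (𝓝 0) := by
        have := tendsto_one_div_add_atTop_nhds_zero_nat.const_mul (2 * a)
        simpa [mul_one_div, div_eq_mul_inv] using this
      have h2 := (Real.continuous_sqrt.tendsto' 0 0 Real.sqrt_zero).comp h1
      exact h2
  obtain ⟨L, hL⟩ := cauchySeq_tendsto_of_complete hcauchy
  have hvL : Tendsto v atTop (𝓝 L) := (tendsto_add_atTop_iff_nat 1).mp hL
  -- L is fixed by α
  have hαL : α L = L := by
    have h1 : Tendsto (fun N => α (v N) - v N) atTop (𝓝 (α L - L)) :=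
      (Tendsto.comp (α.continuous.tendsto L) hvL).sub hvL
    have h2 : ∀ᶠ N : ℕ in atTop, ‖α (v N) - v N‖ ≤ 2 * ‖w‖ / N := by
      filter_upwards [eventually_ge_atTop 1] with N hN
      have hαs : α (s N) - s N = u N - u 0 := by
        have h5 : α (s N) = ∑ j ∈ range N, u (j + 1) := by
          rw [hs, map_sum]
          refine Finset.sum_congr rfl fun j _ => ?_
          exact (Function.iterate_succ_apply' (⇑α) j w).symm
        rw [h5, hs, ← Finset.sum_sub_distrib, Finset.sum_range_sub u]
      have hform : α (v N) - v N = ((N : ℂ))⁻¹ • (u N - u 0) := by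
        rw [hv]
        simp only [map_smul]
        rw [← smul_sub, hαs]
      rw [hform, norm_smul, norm_inv, Complex.norm_natCast]
      have h3 : ‖u N - u 0‖ ≤ 2 * ‖w‖ := by
        calc ‖u N - u 0‖ ≤ ‖u N‖ + ‖u 0‖ := norm_sub_le _ _
          _ = 2 * ‖w‖ := by rw [hu]; simp only; rw [iterNorm, iterNorm]; ring
      have hN0 : (0 : ℝ) ≤ (N : ℝ)⁻¹ := by positivity
      calc (N : ℝ)⁻¹ * ‖u N - u 0‖ ≤ (N : ℝ)⁻¹ * (2 * ‖w‖) :=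
            mul_le_mul_of_nonneg_left h3 hN0
        _ = 2 * ‖w‖ / N := by ring
    have h3 : Tendsto (fun N => α (v N) - v N) atTop (𝓝 0) :=
      squeeze_zero_norm' h2 (tendsto_const_div_atTop_nhds_zero_nat (2 * ‖w‖))
    have h4 := tendsto_nhds_unique h1 h3
    exact sub_eq_zero.mp h4
  have hLw : ⟪L, w⟫ = 0 := by
    rw [← inner_conj_symm, horth L hαL, map_zero]
  -- first limit
  have hlim1 : Tendsto (fun N => ⟪v N, w⟫) atTop (𝓝 (0 : ℂ)) := by
    have h0 := Filter.Tendsto.inner (𝕜 := ℂ) hvL (tendsto_const_nhds (x := w))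
    rwa [hLw] at h0
  -- second limit
  have hsw : ∀ N : ℕ, 1 ≤ N → ⟪s N, w⟫ = N * d + (((‖w‖ ^ 2 : ℝ) : ℂ) - d) := by
    intro N hN
    rw [hs]
    simp only [sum_inner]
    have h1 : ∀ j ∈ range N, ⟪u j, w⟫ = d + if j = 0 then ((‖w‖ ^ 2 : ℝ) : ℂ) - d else 0 := by
      intro j _
      rcases Nat.eq_zero_or_pos j with h | h
      · subst h
        have : ⟪u 0, w⟫ = ((‖w‖ ^ 2 : ℝ) : ℂ) := by
          show ⟪w, w⟫ = _
          rw [inner_self_eq_norm_sq_to_K]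
          norm_cast
        rw [this]; simp
      · rw [hd j h]; simp [Nat.pos_iff_ne_zero.mp h]
    rw [Finset.sum_congr rfl h1, Finset.sum_add_distrib, Finset.sum_const, Finset.card_range,
      Finset.sum_ite_eq' (range N) 0 (fun _ => ((‖w‖ ^ 2 : ℝ) : ℂ) - d),
      if_pos (Finset.mem_range.mpr (by omega))]
    rw [nsmul_eq_mul]
  have hform2 : (fun N => ⟪v N, w⟫) =ᶠ[atTop]
      (fun N : ℕ => ((((N : ℝ)⁻¹ : ℝ)) : ℂ) * (((‖w‖ ^ 2 : ℝ) : ℂ) - d) + d) := by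
    filter_upwards [eventually_ge_atTop 1] with N hN
    have hN0 : ((N : ℂ)) ≠ 0 := by
      simp [Nat.pos_iff_ne_zero.mp hN]
    rw [hv]
    simp only [inner_smul_left, map_inv₀, Complex.conj_natCast]
    rw [hsw N hN]
    push_cast
    field_simp
    ring
  have hlim2 : Tendsto (fun N => ⟪v N, w⟫) atTop (𝓝 d) := by
    have h1 : Tendsto (fun N : ℕ => ((((N : ℝ)⁻¹ : ℝ)) : ℂ)) atTop (𝓝 (0 : ℂ)) := by
      have h0 := (Complex.continuous_ofReal.tendsto 0).comp tendsto_inv_atTop_nhds_zero_nat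
      simp only [Complex.ofReal_zero] at h0
      exact h0
    have h2 := (h1.mul_const (((‖w‖ ^ 2 : ℝ) : ℂ) - d)).add_const d
    rw [zero_mul, zero_add] at h2
    exact Tendsto.congr' hform2.symm h2
  exact (tendsto_nhds_unique hlim2 hlim1)

end key

lemma iterAdd {H : Type*} [NormedAddCommGroup H] [InnerProductSpace ℂ H]
    (α : H →ₗᵢ[ℂ] H) (j : ℕ) (a b : H) :
    (⇑α)^[j] (a + b) = (⇑α)^[j] a + (⇑α)^[j] b := by
  induction j with
  | zero => rfl
  | succ n ih => simp only [Function.iterate_succ_apply', ih, map_add]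

/-- Let `(ι n)` be a spreadable sequence of isometries from `K` into `H`, i.e.
`ι_j^* ι_i = C` for all `i < j` (expressed via inner products:
`⟪ι j x, ι i y⟫ = ⟪x, C y⟫`).  Let `α` be the associated shift isometry, satisfying
`α (ι n x) = ι (n+1) x`, and let `Q` be the orthogonal projection onto the closed
subspace of vectors fixed by `α` (characterized by: `Q z` is fixed by `α` and `z - Q z`
is orthogonal to every fixed vector).  Then the operator angle `C` is positive:
`⟨x, C x⟩ = ‖Q (ι 0 x)‖² ≥ 0` for all `x ∈ K`. -/
theorem spreadable_operator_angle_nonneg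
    {K H : Type*} [NormedAddCommGroup K] [InnerProductSpace ℂ K] [CompleteSpace K]
    [NormedAddCommGroup H] [InnerProductSpace ℂ H] [CompleteSpace H]
    (ι : ℕ → K →ₗᵢ[ℂ] H) (C : K →L[ℂ] K)
    (hC : ∀ i j : ℕ, i < j → ∀ x y : K, (inner ℂ (ι j x) (ι i y) : ℂ) = inner ℂ x (C y))
    (α : H →ₗᵢ[ℂ] H) (hα : ∀ (n : ℕ) (x : K), α (ι n x) = ι (n + 1) x)
    (Q : H → H)
    (hQfix : ∀ z : H, α (Q z) = Q z)
    (hQorth : ∀ z w : H, α w = w → (inner ℂ (z - Q z) w : ℂ) = 0)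
    (x : K) :
    (inner ℂ x (C x) : ℂ) = ((‖Q (ι 0 x)‖ ^ 2 : ℝ) : ℂ) ∧
      0 ≤ RCLike.re (inner ℂ x (C x) : ℂ) := by
  set z : H := ι 0 x with hz
  set p : H := Q z with hp
  set wv : H := z - p with hw
  have hfix : α p = p := hQfix z
  have hwp : ⟪wv, p⟫ = 0 := hQorth z p hfix
  have hpw : ⟪p, wv⟫ = 0 := by rw [← inner_conj_symm, hwp, map_zero]
  have hιz : ∀ j : ℕ, ι j x = (⇑α)^[j] z := by
    intro j
    induction j with
    | zero => rfl
    | succ n ih => rw [← hα n x, ih, ← Function.iterate_succ_apply' (⇑α) n z]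
  have horthw : ∀ v : H, α v = v → ⟪wv, v⟫ = 0 := fun v hv => hQorth z v hv
  have hzpw : z = p + wv := by rw [hw]; abel
  have hd : ∀ j : ℕ, 1 ≤ j →
      ⟪(⇑α)^[j] wv, wv⟫ = (inner ℂ x (C x) : ℂ) - ((‖p‖ ^ 2 : ℝ) : ℂ) := by
    intro j hj
    have h1 : ⟪(⇑α)^[j] z, z⟫ = (inner ℂ x (C x) : ℂ) := by
      rw [← hιz j, hz]
      exact hC 0 j hj x x
    have hfixj : (⇑α)^[j] p = p := iterFixed α hfix j
    have h2 : ⟪(⇑α)^[j] wv, p⟫ = 0 := by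
      conv_lhs => rw [← hfixj]
      rw [iterInner, hwp]
    have h3 : ⟪(⇑α)^[j] z, z⟫
        = ⟪p, p⟫ + ⟪p, wv⟫ + (⟪(⇑α)^[j] wv, p⟫ + ⟪(⇑α)^[j] wv, wv⟫) := by
      conv_lhs => rw [hzpw, iterAdd, hfixj]
      rw [inner_add_left, inner_add_right, inner_add_right]
    have h4 : ⟪p, p⟫ = ((‖p‖ ^ 2 : ℝ) : ℂ) := by
      rw [inner_self_eq_norm_sq_to_K]
      norm_cast
    rw [h1, hpw, h2, h4] at h3
    linear_combination -h3
  have hd0 := keyZero α wv _ hd horthw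
  have hmain : (inner ℂ x (C x) : ℂ) = ((‖p‖ ^ 2 : ℝ) : ℂ) := sub_eq_zero.mp hd0
  constructor
  · exact hmain
  · rw [hmain]
    simp only [RCLike.re_to_complex, Complex.ofReal_re]
    positivity
end
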